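/- Let m ≤ n be natural numbers, and let ι : EuclideanSpace ℂ (Fin m) →ₗᵢ[ℂ] EuclideanSpace ℂ (Fin n) be the standard inclusion, given by (ι x) i = x ⟨i, h⟩ if h : (i : ℕ) < m and (ι x) i = 0 otherwise. Consider the action of the group G(n) of ℂ-linear isometric equivalences of EuclideanSpace ℂ (Fin n) on linear isometries by postcomposition. Then the stabilizer subgroup { e ∈ G(n) | e ∘ ι = ι } is isomorphic, as a group, to the group G(n−m) of ℂ-linear isometric equivalences of EuclideanSpace ℂ (Fin (n−m)). -/

import Mathlib

/-!
An isometry `e` fixing `K = range ι` pointwise preserves `Kᗮ` (it preserves inner products with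
`K`), and `e` is recovered from its restriction to `Kᗮ` because `E = K ⊕ Kᗮ`; conversely every
isometry of `Kᗮ` extends by the identity on `K`. Hence the stabilizer is the isometry group of
`Kᗮ`, which has dimension `n - m` and is therefore isometric to `ℂ^(n - m)`.
-/

/-- The stabilizer, inside the group of `ℂ`-linear isometric equivalences of
`EuclideanSpace ℂ (Fin n)`, of a linear isometric embedding
`ι : EuclideanSpace ℂ (Fin m) →ₗᵢ[ℂ] EuclideanSpace ℂ (Fin n)` under the
postcomposition action. -/
noncomputable def stabilizerOfInclusion {m n : ℕ}
    (ι : EuclideanSpace ℂ (Fin m) →ₗᵢ[ℂ] EuclideanSpace ℂ (Fin n)) :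
    Subgroup (EuclideanSpace ℂ (Fin n) ≃ₗᵢ[ℂ] EuclideanSpace ℂ (Fin n)) where
  carrier := { e | ⇑e ∘ ⇑ι = ⇑ι }
  one_mem' := by
    funext x
    simp
  mul_mem' := by
    intro a b ha hb
    funext x
    have hbx := congrFun hb x
    have hax := congrFun ha x
    simp only [Function.comp_apply] at hbx hax ⊢
    simp only [LinearIsometryEquiv.coe_mul, Function.comp_apply]
    rw [hbx]
    simpa using hax
  inv_mem' := by
    intro a ha
    funext x
    have hax := congrFun ha x
    simp only [Function.comp_apply] at hax ⊢
    simp only [LinearIsometryEquiv.coe_inv]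
    have h2 : a.symm (a (ι x)) = ι x := a.symm_apply_apply _
    rw [hax] at h2
    exact h2

open Module

namespace LinearIsometryEquiv

variable {R E F : Type*} [Semiring R] [SeminormedAddCommGroup E] [SeminormedAddCommGroup F]
  [Module R E] [Module R F]

def conjMulEquiv (A : E ≃ₗᵢ[R] F) : (E ≃ₗᵢ[R] E) ≃* (F ≃ₗᵢ[R] F) where
  toFun e := (A.symm.trans e).trans A
  invFun f := (A.trans f).trans A.symm
  left_inv e := by ext; simp
  right_inv f := by ext; simp
  map_mul' e f := by ext; simp [coe_mul]

@[simp] lemma conjMulEquiv_apply (A : E ≃ₗᵢ[R] F) (e : E ≃ₗᵢ[R] E) (x : F) :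
    A.conjMulEquiv e x = A (e (A.symm x)) := rfl

end LinearIsometryEquiv

namespace Submodule

variable {𝕜 E : Type*} [RCLike 𝕜] [NormedAddCommGroup E] [InnerProductSpace 𝕜 E]
  (K : Submodule 𝕜 E)

def isometryFixingSubgroup : Subgroup (E ≃ₗᵢ[𝕜] E) where
  carrier := {e | ∀ x ∈ K, e x = x}
  one_mem' _ _ := rfl
  mul_mem' {a b} ha hb x hx := by
    rw [LinearIsometryEquiv.coe_mul, Function.comp_apply, hb x hx, ha x hx]
  inv_mem' {a} ha x hx := by
    rw [LinearIsometryEquiv.coe_inv, a.symm_apply_eq, ha x hx]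

variable {K}

lemma map_eq_self_of_mem_isometryFixingSubgroup {e : E ≃ₗᵢ[𝕜] E}
    (he : e ∈ K.isometryFixingSubgroup) : K.map (e.toLinearEquiv : E →ₗ[𝕜] E) = K := by
  ext x
  constructor
  · rintro ⟨y, hy, rfl⟩
    simpa [he y hy] using hy
  · exact fun hx => ⟨x, hx, he x hx⟩

lemma orthogonal_map_eq_self_of_mem_isometryFixingSubgroup {e : E ≃ₗᵢ[𝕜] E}
    (he : e ∈ K.isometryFixingSubgroup) : Kᗮ.map (e.toLinearEquiv : E →ₗ[𝕜] E) = Kᗮ := by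
  rw [map_orthogonal_equiv, map_eq_self_of_mem_isometryFixingSubgroup he]

variable (K)

def restrictOrthogonal : K.isometryFixingSubgroup →* (Kᗮ ≃ₗᵢ[𝕜] Kᗮ) where
  toFun e := (LinearIsometryEquiv.submoduleMap Kᗮ e.1).trans
    (LinearIsometryEquiv.ofEq _ _ (orthogonal_map_eq_self_of_mem_isometryFixingSubgroup e.2))
  map_one' := rfl
  map_mul' _ _ := rfl

@[simp] lemma coe_restrictOrthogonal_apply (e : K.isometryFixingSubgroup) (v : Kᗮ) :
    (K.restrictOrthogonal e v : E) = e.1 v := rfl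

variable [K.HasOrthogonalProjection]

noncomputable def extendOrthogonal : (Kᗮ ≃ₗᵢ[𝕜] Kᗮ) →* K.isometryFixingSubgroup where
  toFun g := ⟨K.orthogonalDecomposition.symm.conjMulEquiv
      (.withLpProdCongr 2 (.refl 𝕜 K) g), fun x hx => by
    simp [orthogonalProjectionOnto_orthogonal_apply_eq_zero hx, starProjection_eq_self_iff.2 hx]⟩
  map_one' := Subtype.ext <| (MulEquiv.map_eq_one_iff _).2 rfl
  map_mul' _ _ := Subtype.ext <| by
    simp only [Subgroup.coe_mul, ← map_mul]
    rfl

lemma extendOrthogonal_apply_coe (g : Kᗮ ≃ₗᵢ[𝕜] Kᗮ) (v : Kᗮ) :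
    (K.extendOrthogonal g : E ≃ₗᵢ[𝕜] E) v = g v := by
  simp [extendOrthogonal, (K.starProjection_apply_eq_zero_iff).2 v.2]

lemma restrictOrthogonal_extendOrthogonal (g : Kᗮ ≃ₗᵢ[𝕜] Kᗮ) :
    K.restrictOrthogonal (K.extendOrthogonal g) = g :=
  LinearIsometryEquiv.ext fun v => Subtype.ext <| K.extendOrthogonal_apply_coe g v

lemma extendOrthogonal_restrictOrthogonal (e : K.isometryFixingSubgroup) :
    K.extendOrthogonal (K.restrictOrthogonal e) = e := by
  refine Subtype.ext <| LinearIsometryEquiv.ext fun x => ?_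
  rw [← K.starProjection_add_starProjection_orthogonal x, map_add, map_add, starProjection_apply,
    starProjection_apply, extendOrthogonal_apply_coe, coe_restrictOrthogonal_apply,
    (K.extendOrthogonal _).2 _ (coe_mem _), e.2 _ (coe_mem _)]

noncomputable def isometryFixingSubgroupEquiv : K.isometryFixingSubgroup ≃* (Kᗮ ≃ₗᵢ[𝕜] Kᗮ) :=
  K.restrictOrthogonal.toMulEquiv K.extendOrthogonal
    (MonoidHom.ext K.extendOrthogonal_restrictOrthogonal)
    (MonoidHom.ext K.restrictOrthogonal_extendOrthogonal)

end Submodule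

lemma LinearIsometry.finrank_orthogonal_range {𝕜 E F : Type*} [RCLike 𝕜]
    [NormedAddCommGroup E] [InnerProductSpace 𝕜 E] [NormedAddCommGroup F] [InnerProductSpace 𝕜 F]
    [FiniteDimensional 𝕜 F] (f : E →ₗᵢ[𝕜] F) :
    finrank 𝕜 (f.toLinearMap.range)ᗮ = finrank 𝕜 F - finrank 𝕜 E := by
  have hsum := f.toLinearMap.range.finrank_add_finrank_orthogonal
  rw [LinearMap.finrank_range_of_inj f.injective] at hsum
  omega

lemma stabilizerOfInclusion_eq_isometryFixingSubgroup {m n : ℕ}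
    (ι : EuclideanSpace ℂ (Fin m) →ₗᵢ[ℂ] EuclideanSpace ℂ (Fin n)) :
    stabilizerOfInclusion ι = ι.toLinearMap.range.isometryFixingSubgroup :=
  Subgroup.ext fun _ =>
    ⟨fun h _ ⟨x, hx⟩ => hx ▸ congrFun h x, fun h => funext fun x => h _ ⟨x, rfl⟩⟩

theorem stabilizer_of_standard_inclusion_iso_general (m n : ℕ)
    (ι : EuclideanSpace ℂ (Fin m) →ₗᵢ[ℂ] EuclideanSpace ℂ (Fin n)) :
    Nonempty ((stabilizerOfInclusion ι) ≃*
      (EuclideanSpace ℂ (Fin (n - m)) ≃ₗᵢ[ℂ] EuclideanSpace ℂ (Fin (n - m)))) := by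
  set K := ι.toLinearMap.range
  have hdim : finrank ℂ Kᗮ = n - m := by
    simpa using ι.finrank_orthogonal_range
  exact ⟨(MulEquiv.subgroupCongr (stabilizerOfInclusion_eq_isometryFixingSubgroup ι)).trans <|
    K.isometryFixingSubgroupEquiv.trans
      ((stdOrthonormalBasis ℂ Kᗮ).reindex (finCongr hdim)).repr.conjMulEquiv⟩

/-- For `m ≤ n` and `ι` the standard inclusion `ℂ^m → ℂ^n`, the stabilizer of `ι` in
the group `G(n)` of `ℂ`-linear isometric equivalences of `EuclideanSpace ℂ (Fin n)` (acting
by postcomposition) is isomorphic, as a group, to the group `G(n - m)` of linear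
isometric equivalences of `EuclideanSpace ℂ (Fin (n - m))`. -/
theorem stabilizer_of_standard_inclusion_iso (m n : ℕ) (hmn : m ≤ n)
    (ι : EuclideanSpace ℂ (Fin m) →ₗᵢ[ℂ] EuclideanSpace ℂ (Fin n))
    (hι : ∀ (x : EuclideanSpace ℂ (Fin m)) (i : Fin n),
      ι x i = if h : (i : ℕ) < m then x ⟨(i : ℕ), h⟩ else 0) :
    Nonempty ((stabilizerOfInclusion ι) ≃*
      (EuclideanSpace ℂ (Fin (n - m)) ≃ₗᵢ[ℂ] EuclideanSpace ℂ (Fin (n - m)))) :=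
  stabilizer_of_standard_inclusion_iso_general m n ι
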